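/- Let ⟨G, h, g⟩ be a hat guessing game where vertex A is adjacent to all other vertices, h(A) = s+1, and g(A) = s. Let G' = G \ A and consider the game ⟨G', h|_{V(G')}, (s+1)·g|_{V(G')}⟩. Then ⟨G, h, g⟩ is winning if and only if the game on G' is winning. -/

import Mathlib

/-- A winning strategy in the hat guessing game `⟨G, h, g⟩`: each sage `v` deterministically
outputs at most `g v` guesses depending only on the hat colors of its neighbors, and for
every hat assignment (with `c v < h v`) some sage's guess set contains its own color. -/
def HatWinning {V : Type*} (G : SimpleGraph V) (h g : V → ℕ) : Prop :=
  ∃ σ : V → (V → ℕ) → Finset ℕ,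
    (∀ v c c', (∀ u, G.Adj v u → c u = c' u) → σ v c = σ v c') ∧
    (∀ v c, (σ v c).card ≤ g v) ∧
    ∀ c : V → ℕ, (∀ v, c v < h v) → ∃ v, c v ∈ σ v c

/-- The hat guessing game played by the sages occupying the vertices of `S` only
(the game on the induced subgraph `G[S]`). -/
def HatWinningOn {V : Type*} (G : SimpleGraph V) (S : Set V) (h g : V → ℕ) : Prop :=
  ∃ σ : V → (V → ℕ) → Finset ℕ,
    (∀ v ∈ S, ∀ c c', (∀ u ∈ S, G.Adj v u → c u = c' u) → σ v c = σ v c') ∧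
    (∀ v ∈ S, ∀ c, (σ v c).card ≤ g v) ∧
    ∀ c : V → ℕ, (∀ v ∈ S, c v < h v) → ∃ v ∈ S, c v ∈ σ v c

/-!
Given a winning strategy on `G`, a sage of `G \ A` guesses the union of its guesses over all
`s + 1` colors of `A`. As `A` cannot see its own hat, its `s` guesses miss some color `a`, and in
the coloring where `A` wears `a` the winner is a sage of `G \ A`.

Conversely, every sage `v ≠ A` of a winning strategy on `G \ A` splits its `(s + 1) g(v)`
guesses into `s + 1` blocks of size `g(v)` and, seeing the color `a` of `A`, guesses block `a`.
Then `A`, who sees the whole of `G \ A`, guesses the colors whose blocks contain no correct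
guess; some block does contain one, so these are at most `s` colors.
-/

open Finset Function

def hatBlock (k : ℕ) (t : Finset ℕ) (a : ℕ) : Finset ℕ :=
  (((t.sort (· ≤ ·)).drop (a * k)).take k).toFinset

lemma card_hatBlock_le (k : ℕ) (t : Finset ℕ) (a : ℕ) : (hatBlock k t a).card ≤ k :=
  (List.toFinset_card_le _).trans (List.length_take_le _ _)

lemma exists_mem_hatBlock {k n : ℕ} {t : Finset ℕ} (ht : t.card ≤ n * k) {x : ℕ} (hx : x ∈ t) :
    ∃ a < n, x ∈ hatBlock k t a := by
  obtain ⟨i, hi, rfl⟩ := List.getElem_of_mem ((mem_sort (· ≤ ·)).2 hx)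
  have hlen : (t.sort (· ≤ ·)).length = t.card := length_sort _
  have hk : 0 < k := Nat.pos_of_ne_zero fun hk => by rw [hk, mul_zero] at ht; omega
  refine ⟨i / k, (Nat.div_lt_iff_lt_mul hk).2 (by omega), ?_⟩
  have hi' : i / k * k + i % k = i := Nat.div_add_mod' i k
  rw [hatBlock, List.mem_toFinset, List.mem_take_iff_getElem]
  refine ⟨i % k, ?_, ?_⟩
  · rw [List.length_drop]; exact lt_min (Nat.mod_lt _ hk) (by omega)
  · simp only [List.getElem_drop, hi']

theorem HatWinning.hatWinningOn_ne {V : Type*} {G : SimpleGraph V} {h g : V → ℕ}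
    (hwin : HatWinning G h g) {A : V} (hgA : g A < h A) :
    HatWinningOn G {x | x ≠ A} h (fun x => h A * g x) := by
  classical
  obtain ⟨σ, hlocal, hcard, hwins⟩ := hwin
  refine ⟨fun v c => (range (h A)).biUnion fun a => σ v (update c A a), ?_, ?_, ?_⟩
  · intro v _ c c' hc
    refine biUnion_congr rfl fun a _ => hlocal v _ _ fun u hu => ?_
    rcases eq_or_ne u A with rfl | huA
    · simp
    · simp only [update_of_ne huA]; exact hc u huA hu
  · intro v _ c
    simpa using card_biUnion_le_card_mul (range (h A)) _ _ fun a _ => hcard v (update c A a)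
  · intro c hc
    -- `A` does not see its own hat, so the same at most `g A` guesses miss some color `a`
    have hblind : ∀ a, σ A (update c A a) = σ A (update c A 0) := fun a =>
      hlocal A _ _ fun u hu => by simp [update_of_ne (G.ne_of_adj hu).symm]
    obtain ⟨a, ha, hmiss⟩ : ∃ a < h A, a ∉ σ A (update c A 0) := by
      by_contra! hall
      have := (card_le_card fun a ha => hall a (mem_range.1 ha)).trans (hcard A (update c A 0))
      rw [card_range] at this
      omega
    have hvalid : ∀ v, update c A a v < h v := fun v => by
      rcases eq_or_ne v A with rfl | hvA
      · simpa using ha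
      · simpa [hvA] using hc v hvA
    obtain ⟨v, hv⟩ := hwins _ hvalid
    have hvA : v ≠ A := by
      rintro rfl
      simp [hblind] at hv
      exact hmiss hv
    exact ⟨v, hvA, mem_biUnion.2 ⟨a, mem_range.2 ha, by simpa [hvA] using hv⟩⟩

theorem HatWinningOn.hatWinning_of_forall_adj {V : Type*} {G : SimpleGraph V} {h g : V → ℕ}
    {A : V} (hwin : HatWinningOn G {x | x ≠ A} h (fun x => h A * g x))
    (hadj : ∀ x, x ≠ A → G.Adj A x) (hgA : h A ≤ g A + 1) : HatWinning G h g := by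
  classical
  obtain ⟨τ, hlocal, hcard, hwins⟩ := hwin
  let uncovered : (V → ℕ) → Finset ℕ := fun c =>
    (range (h A)).filter fun a => ∀ v, v ≠ A → c v ∉ hatBlock (g v) (τ v c) a
  refine ⟨fun v c => if v = A then
      (if (uncovered (update c A 0)).card ≤ g A then uncovered (update c A 0) else ∅)
    else hatBlock (g v) (τ v (update c A 0)) (c A), ?_, ?_, ?_⟩
  · intro v c c' hc
    rcases eq_or_ne v A with rfl | hvA
    · have : update c v 0 = update c' v 0 := by
        ext u
        rcases eq_or_ne u v with rfl | huv
        · simp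
        · simp [update_of_ne huv, hc u (hadj u huv)]
      simp [this]
    · have hτ : τ v (update c A 0) = τ v (update c' A 0) :=
        hlocal v hvA _ _ fun u huA hu => by simp [update_of_ne huA, hc u hu]
      simp [hvA, hτ, hc A (hadj v hvA).symm]
  · intro v c
    dsimp only
    split_ifs with hvA hsmall
    · exact hvA ▸ hsmall
    · simp
    · exact card_hatBlock_le _ _ _
  · intro c hc
    set c₀ := update c A 0
    have hc₀ : ∀ v, v ≠ A → c₀ v = c v := fun v hv => update_of_ne hv _ _
    obtain ⟨w, hwA, hw⟩ := hwins c₀ fun v hv => hc₀ v hv ▸ hc v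
    obtain ⟨a, ha, hwa⟩ := exists_mem_hatBlock (hcard w hwA c₀) hw
    have huncovered : (uncovered c₀).card ≤ g A := by
      have : uncovered c₀ ⊂ range (h A) :=
        (filter_ssubset).2 ⟨a, mem_range.2 ha, fun hall => hall w hwA hwa⟩
      have := card_lt_card this
      rw [card_range] at this
      omega
    by_cases hcA : c A ∈ uncovered c₀
    · exact ⟨A, by dsimp only; rw [if_pos rfl, if_pos huncovered]; exact hcA⟩
    · obtain ⟨v, hvA, hv⟩ : ∃ v, v ≠ A ∧ c₀ v ∈ hatBlock (g v) (τ v c₀) (c A) := by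
        simpa [uncovered, hc A] using hcA
      exact ⟨v, by simpa [hvA, hc₀ v hvA] using hv⟩

theorem strong_dominating_vertex_removal {V : Type*} (G : SimpleGraph V) (h g : V → ℕ)
    (A : V) (s : ℕ) (hadj : ∀ x, x ≠ A → G.Adj A x) (hA : h A = s + 1) (hgA : g A = s) :
    HatWinning G h g ↔ HatWinningOn G {x | x ≠ A} h (fun x => (s + 1) * g x) := by
  rw [← hA]
  exact ⟨fun hwin => hwin.hatWinningOn_ne (by omega),
    fun hwin => hwin.hatWinning_of_forall_adj hadj (by omega)⟩
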